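/- The number of squarefree integers up to 43 is 29; equivalently Q_2(43) = 29, and hence R_2(43) = 29 − 43/ζ(2) > 1.11 · 43^{1/4}. -/

import Mathlib

open Filter MeasureTheory Finset

/-- `n` is `k`-free: no `d^k` with `d > 1` divides `n`. -/
def KFree (k n : ℕ) : Prop := ∀ d : ℕ, 1 < d → ¬ d ^ k ∣ n

open Classical in
/-- `Q k x` = number of `k`-free positive integers not exceeding `x`. -/
noncomputable def Qf (k : ℕ) (x : ℝ) : ℕ :=
  ((Finset.Icc 1 ⌊x⌋₊).filter fun n => KFree k n).card

theorem kFree_two_iff_squarefree (n : ℕ) : KFree 2 n ↔ Squarefree n := by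
  rw [Nat.squarefree_iff_prime_squarefree]
  refine ⟨fun h p hp => by simpa [sq] using h p hp.one_lt, fun h d hd hdn => ?_⟩
  exact h d.minFac (Nat.minFac_prime hd.ne')
    (dvd_trans (mul_dvd_mul d.minFac_dvd d.minFac_dvd) (by simpa [sq] using hdn))

theorem Qf_two_eq_card_squarefree (x : ℝ) :
    Qf 2 x = #{n ∈ Icc 1 ⌊x⌋₊ | Squarefree n} := by
  simp only [Qf, kFree_two_iff_squarefree]

theorem Nat.squarefree_iff_of_lt_49 {n : ℕ} (hn₀ : n ≠ 0) (hn : n < 49) :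
    Squarefree n ↔ ¬ 4 ∣ n ∧ ¬ 9 ∣ n ∧ ¬ 25 ∣ n := by
  rw [Nat.squarefree_iff_prime_squarefree]
  refine ⟨fun h => ⟨h 2 Nat.prime_two, h 3 Nat.prime_three, h 5 Nat.prime_five⟩, ?_⟩
  rintro ⟨h4, h9, h25⟩ p hp hpn
  have hp7 : p < 7 := Nat.mul_self_lt_mul_self_iff.mp <|
    (Nat.le_of_dvd (Nat.pos_of_ne_zero hn₀) hpn).trans_lt hn
  interval_cases p <;> simp_all +decide

theorem card_squarefree_Icc_43 : #{n ∈ Icc 1 43 | Squarefree n} = 29 := by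
  rw [Finset.filter_congr fun n hn => Nat.squarefree_iff_of_lt_49
    (by simp at hn; omega) (by simp at hn; omega)]
  decide

theorem riemannZeta_two_re : (riemannZeta 2).re = Real.pi ^ 2 / 6 := by
  rw [riemannZeta_two, ← Complex.ofReal_pow, ← Complex.ofReal_ofNat, ← Complex.ofReal_div,
    Complex.ofReal_re]

theorem Q2_at_43 :
    Qf 2 43 = 29 ∧
    (29 : ℝ) - 43 / (riemannZeta 2).re > 1.11 * (43 : ℝ) ^ ((1 : ℝ) / 4) := by
  refine ⟨by rw [Qf_two_eq_card_squarefree, Nat.floor_ofNat, card_squarefree_Icc_43], ?_⟩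
  have hroot : (43 : ℝ) ^ ((1 : ℝ) / 4) < 2.5613 := by
    rw [one_div, Real.rpow_inv_lt_iff_of_pos (by norm_num) (by norm_num) (by norm_num)]
    norm_num
  have hzeta : 43 / (riemannZeta 2).re < 26.143 := by
    rw [riemannZeta_two_re, div_lt_iff₀ (by positivity)]
    nlinarith [Real.pi_gt_d4]
  linarith
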